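/- The shuffle algebra ⊕_{d≥0} Q[x_1,...,x_d]^{S_d} with product (f*g)(x_1,...,x_{d+e}) = Σ_{(d,e)-shuffles σ} f(x_{σ(1)},...,x_{σ(d)}) g(x_{σ(d+1)},...,x_{σ(d+e)}) Π_{1≤μ≤d<ν≤d+e}(x_{σ(ν)} − x_{σ(μ)})^{−1} is isomorphic, as a graded algebra, to the exterior algebra over Q on generators ψ_0, ψ_1, ψ_2, ..., where ψ_i ∈ degree-1 component Q[x] is x^i. -/

import Mathlib

open MvPolynomial

attribute [local instance] Classical.propDecidable

noncomputable abbrev FF (d : ℕ) : Type := FractionRing (MvPolynomial (Fin d) ℚ)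

/-- Extension of variable renaming along an injection to fraction fields. -/
noncomputable def embF {σ τ : Type} (v : σ → τ) (hv : Function.Injective v) :
    FractionRing (MvPolynomial σ ℚ) →+* FractionRing (MvPolynomial τ ℚ) :=
  IsFractionRing.lift (g := (algebraMap (MvPolynomial τ ℚ)
      (FractionRing (MvPolynomial τ ℚ))).comp (rename v).toRingHom)
    ((IsFractionRing.injective (MvPolynomial τ ℚ)
        (FractionRing (MvPolynomial τ ℚ))).comp (rename_injective v hv))

/-- `(d,e)`-shuffles. -/
def IsShuffle {d e : ℕ} (σ : Equiv.Perm (Fin (d + e))) : Prop :=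
  StrictMono (fun i : Fin d => σ (Fin.castAdd e i)) ∧
    StrictMono (fun j : Fin e => σ (Fin.natAdd d j))

/-- The CoHa shuffle product of the one-vertex quiver with no arrows,
`(f*g) = Σ_σ f(x_{σ(1)},…) g(x_{σ(d+1)},…) · Π_{μ≤d<ν}(x_{σ(ν)} − x_{σ(μ)})⁻¹`. -/
noncomputable def shuffleMul {d e : ℕ} (f : FF d) (g : FF e) : FF (d + e) :=
  ∑ σ ∈ Finset.univ.filter (fun σ : Equiv.Perm (Fin (d + e)) => IsShuffle σ),
    embF (fun i : Fin d => σ (Fin.castAdd e i))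
        (σ.injective.comp (Fin.castAdd_injective d e)) f *
      embF (fun j : Fin e => σ (Fin.natAdd d j))
        (σ.injective.comp (Fin.natAddEmb d).injective) g *
      (algebraMap (MvPolynomial (Fin (d + e)) ℚ) (FF (d + e))
        (∏ μ : Fin d, ∏ ν : Fin e,
          (X (σ (Fin.natAdd d ν)) - X (σ (Fin.castAdd e μ)))))⁻¹

/-- `ψ_i ∈ H_1 = ℚ[x]`, `ψ_i(x) = x^i`. -/
noncomputable def psiF (i : ℕ) : FF 1 :=
  algebraMap (MvPolynomial (Fin 1) ℚ) (FF 1) (X 0 ^ i)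

/-- Iterated shuffle product `ψ_{k_1} * ⋯ * ψ_{k_d}`. -/
noncomputable def iterProd : (d : ℕ) → (Fin d → ℕ) → FF d
  | 0, _ => 1
  | d + 1, k => shuffleMul (iterProd d (fun i => k i.castSucc)) (psiF (k (Fin.last d)))

/-- The degree-`d` component of the CoHa: (the image in the fraction field of)
the symmetric polynomials `ℚ[x_1,…,x_d]^{S_d}`. -/
noncomputable def symPart (d : ℕ) : Submodule ℚ (FF d) :=
  Submodule.span ℚ {z : FF d | ∃ p : MvPolynomial (Fin d) ℚ,
    p.IsSymmetric ∧ algebraMap (MvPolynomial (Fin d) ℚ) (FF d) p = z}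

/-!
By induction on `d`, `ψ_{k_1} * ⋯ * ψ_{k_d}` is the alternant `det (x_i ^ k_j)` divided by the
Vandermonde determinant `∏_{i<j} (x_j - x_i)`. In the inductive step the Vandermonde factors of the
shuffle product combine into `sign σ` times the Vandermonde determinant in `d + 1` variables, and
since every permutation is uniquely a shuffle followed by a permutation of the first `d` points,
the shuffle sum reassembles the Leibniz expansion of the larger alternant.

Alternants are antisymmetric in `k`, whence `ψ_i * ψ_j = -ψ_j * ψ_i`. For increasing `k` the
monomial `x^k` occurs in the alternant `a_k` only, so these alternants are linearly independent.
They span the alternating polynomials (antisymmetrize monomials), and an alternating polynomial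
vanishes on `x_i = x_j`, so it is divisible by the pairwise coprime factors `x_j - x_i`, hence by
the Vandermonde determinant with a symmetric quotient. Dividing by the Vandermonde determinant
thus identifies their span with the symmetric polynomials.
-/

theorem Equiv.Perm.eq_one_of_strictMono_comp {α : Type*} [Preorder α] {n : ℕ}
    {σ : Equiv.Perm (Fin n)} {k l : Fin n → α} (hk : StrictMono k) (hl : StrictMono l)
    (h : k ∘ σ = l) : σ = 1 := by
  have hσ : StrictMono σ := fun a b hab => hk.lt_iff_lt.mp (by simpa [← h] using hl hab)
  exact Equiv.ext (congrFun hσ.eq_id)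

theorem Tuple.strictMono_comp_sort {α : Type*} [LinearOrder α] {n : ℕ} {f : Fin n → α}
    (hf : Function.Injective f) : StrictMono (f ∘ Tuple.sort f) :=
  (Tuple.monotone_sort f).strictMono_of_injective (hf.comp (Tuple.sort f).injective)

theorem StrictMono.eq_of_comp_perm {α : Type*} [Preorder α] {n : ℕ} {u u' : Fin n → α}
    (hu : StrictMono u) (hu' : StrictMono u') {π π' : Equiv.Perm (Fin n)} (h : u ∘ π = u' ∘ π') :
    u = u' ∧ π = π' := by
  have hcomp : u' ∘ (π' * π⁻¹) = u := funext fun i => by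
    simpa using (congrFun h (π⁻¹ i)).symm
  have hπ : π' = π := mul_inv_eq_one.mp (Equiv.Perm.eq_one_of_strictMono_comp hu' hu hcomp)
  subst hπ
  exact ⟨funext fun i => by simpa using congrFun h (π'⁻¹ i), rfl⟩

theorem Fin.prod_Ioi_castSucc {M : Type*} [CommMonoid M] {n : ℕ} (i : Fin n)
    (f : Fin (n + 1) → M) :
    ∏ j ∈ Finset.Ioi i.castSucc, f j = (∏ j ∈ Finset.Ioi i, f j.castSucc) * f (Fin.last n) := by
  simp only [← Finset.filter_lt_eq_Ioi, Finset.prod_filter, Fin.prod_univ_castSucc,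
    Fin.castSucc_lt_castSucc_iff, Fin.castSucc_lt_last, if_true]

namespace MvPolynomial

section Alternant

variable {R : Type*} [CommRing R] {n : ℕ}

noncomputable def alternant (k : Fin n → ℕ) : MvPolynomial (Fin n) R :=
  (Matrix.of fun i j => X i ^ k j).det

noncomputable def vandermonde (n : ℕ) : MvPolynomial (Fin n) R :=
  ∏ i : Fin n, ∏ j ∈ Finset.Ioi i, (X j - X i)

theorem alternant_eq_sum (k : Fin n → ℕ) :
    (alternant k : MvPolynomial (Fin n) R) =
      ∑ σ : Equiv.Perm (Fin n), Equiv.Perm.sign σ • ∏ i, X (σ i) ^ k i := by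
  simp [alternant, Matrix.det_apply]

theorem vandermonde_eq_alternant :
    (vandermonde n : MvPolynomial (Fin n) R) = alternant fun j => (j : ℕ) :=
  (Matrix.det_vandermonde _).symm

theorem alternant_comp_perm (k : Fin n → ℕ) (π : Equiv.Perm (Fin n)) :
    (alternant (k ∘ π) : MvPolynomial (Fin n) R) = Equiv.Perm.sign π • alternant k := by
  unfold alternant
  rw [Units.smul_def, zsmul_eq_mul, ← Matrix.det_permute']
  rfl

theorem rename_alternant (π : Equiv.Perm (Fin n)) (k : Fin n → ℕ) :
    rename π (alternant k : MvPolynomial (Fin n) R) = Equiv.Perm.sign π • alternant k := by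
  unfold alternant
  rw [Units.smul_def, zsmul_eq_mul, AlgHom.map_det, ← Matrix.det_permute]
  congr 1
  ext i j
  simp

theorem rename_vandermonde (π : Equiv.Perm (Fin n)) :
    rename π (vandermonde n : MvPolynomial (Fin n) R) = Equiv.Perm.sign π • vandermonde n := by
  rw [vandermonde_eq_alternant, rename_alternant]

theorem alternant_eq_zero_of_not_injective {k : Fin n → ℕ} (hk : ¬ Function.Injective k) :
    (alternant k : MvPolynomial (Fin n) R) = 0 := by
  obtain ⟨i, j, hij, hne⟩ := Function.not_injective_iff.mp hk
  exact Matrix.det_zero_of_column_eq hne fun t => by simp [hij]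

theorem aeval_alternant_eq_zero {S : Type*} [CommRing S] [Algebra R S] {f : Fin n → S}
    {i j : Fin n} (hne : i ≠ j) (hf : f i = f j) (k : Fin n → ℕ) :
    aeval f (alternant k : MvPolynomial (Fin n) R) = 0 := by
  rw [alternant, AlgHom.map_det]
  exact Matrix.det_zero_of_row_eq hne (by ext t; simp [hf])

theorem vandermonde_ne_zero [IsDomain R] : (vandermonde n : MvPolynomial (Fin n) R) ≠ 0 := by
  rw [vandermonde, ← Matrix.det_vandermonde]
  exact Matrix.det_vandermonde_ne_zero_iff.mpr X_injective

theorem vandermonde_succ (n : ℕ) :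
    (vandermonde (n + 1) : MvPolynomial (Fin (n + 1)) R) =
      rename Fin.castSucc (vandermonde n) * ∏ i : Fin n, (X (Fin.last n) - X i.castSucc) := by
  simp only [vandermonde, Fin.prod_univ_castSucc (n := n), Fin.prod_Ioi_castSucc,
    Finset.prod_mul_distrib, map_prod, map_sub, rename_X]
  rw [Finset.Ioi_eq_empty.mpr fun j _ => Fin.le_last j, Finset.prod_empty, mul_one]

theorem prod_X_pow_eq_monomial_equivFunOnFinite (e : Fin n → ℕ) :
    ∏ t, (X t : MvPolynomial (Fin n) R) ^ e t =
      monomial (Finsupp.equivFunOnFinite.symm e) 1 := by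
  rw [monomial_eq, C_1, one_mul, Finsupp.prod_fintype _ _ (fun _ => pow_zero _)]
  rfl

theorem X_sub_X_dvd_iff (i j : Fin n) (p : MvPolynomial (Fin n) R) :
    (X i - X j : MvPolynomial (Fin n) R) ∣ p ↔
      aeval (Function.update (X : Fin n → MvPolynomial (Fin n) R) i (X j)) p = 0 := by
  constructor
  · rintro ⟨q, rfl⟩
    rcases eq_or_ne j i with rfl | hji <;> simp [*]
  · intro hp
    set I := Ideal.span {(X i - X j : MvPolynomial (Fin n) R)}
    -- modulo `X i - X j`, substituting `X j` for `X i` does nothing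
    have hquot : (Ideal.Quotient.mkₐ R I).comp (aeval (Function.update X i (X j))) =
        Ideal.Quotient.mkₐ R I := by
      refine algHom_ext fun t => ?_
      rcases eq_or_ne t i with rfl | ht
      · simpa [Ideal.Quotient.eq, I] using Ideal.mem_span_singleton.mpr ⟨-1, by ring⟩
      · simp [ht]
    have := DFunLike.congr_fun hquot p
    rw [AlgHom.comp_apply, hp, map_zero, eq_comm, Ideal.Quotient.mkₐ_eq_mk,
      Ideal.Quotient.eq_zero_iff_mem] at this
    exact Ideal.mem_span_singleton.mp this

theorem prime_X_sub_X [IsDomain R] {i j : Fin n} (hij : i ≠ j) :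
    Prime (X i - X j : MvPolynomial (Fin n) R) := by
  refine ⟨sub_ne_zero.mpr (X_injective.ne hij), fun hu => ?_, fun a b hab => ?_⟩
  · simpa using (X_sub_X_dvd_iff i j 1).mp hu.dvd
  · simpa [X_sub_X_dvd_iff, mul_eq_zero] using hab

theorem X_sub_X_dvd_X_sub_X_iff [Nontrivial R] {i j k l : Fin n} (hij : i < j) (hkl : k < l) :
    (X j - X i : MvPolynomial (Fin n) R) ∣ X l - X k ↔ i = k ∧ j = l := by
  refine ⟨fun h => ?_, by rintro ⟨rfl, rfl⟩; rfl⟩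
  have h := (X_sub_X_dvd_iff j i _).mp h
  simp only [map_sub, aeval_X, sub_eq_zero, Function.update_apply] at h
  split_ifs at h with hl hk hk <;> have := X_injective h <;> omega

theorem prod_X_pow_perm_eq_monomial (σ : Equiv.Perm (Fin n)) (l : Fin n → ℕ) :
    ∏ i, (X (σ i) : MvPolynomial (Fin n) R) ^ l i =
      monomial (Finsupp.equivFunOnFinite.symm (l ∘ σ.symm)) 1 := by
  rw [← prod_X_pow_eq_monomial_equivFunOnFinite,
    ← Equiv.prod_comp σ fun t => (X t : MvPolynomial (Fin n) R) ^ (l ∘ σ.symm) t]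
  simp

theorem coeff_alternant {k l : Fin n → ℕ} (hk : StrictMono k) (hl : StrictMono l) :
    coeff (Finsupp.equivFunOnFinite.symm k) (alternant l : MvPolynomial (Fin n) R) =
      if l = k then 1 else 0 := by
  simp only [alternant_eq_sum, coeff_sum, Units.smul_def, coeff_smul,
    prod_X_pow_perm_eq_monomial, coeff_monomial, Equiv.apply_eq_iff_eq]
  rw [Finset.sum_eq_single 1]
  · simp [← Equiv.Perm.inv_def]
  · intro σ _ hσ
    rw [if_neg fun h => hσ (Equiv.Perm.eq_one_of_strictMono_comp hk hl ?_), smul_zero]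
    rw [← h]
    ext i
    simp
  · simp

theorem linearIndependent_alternant :
    LinearIndependent R fun k : {k : Fin n → ℕ // StrictMono k} =>
      (alternant k.1 : MvPolynomial (Fin n) R) := by
  rw [linearIndependent_iff']
  intro s g hsum k hk
  have hcoeff := congrArg (coeff (Finsupp.equivFunOnFinite.symm k.1)) hsum
  rw [coeff_sum, Finset.sum_eq_single k] at hcoeff
  · simpa [coeff_alternant k.2 k.2] using hcoeff
  · intro l _ hlk
    simp [coeff_alternant k.2 l.2, Subtype.ext_iff.not.mp hlk]
  · exact fun h => absurd hk h

theorem alternant_mem_span_strictMono (k : Fin n → ℕ) :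
    (alternant k : MvPolynomial (Fin n) R) ∈
      Submodule.span R (Set.range fun k : {k : Fin n → ℕ // StrictMono k} => alternant k.1) := by
  by_cases hk : Function.Injective k
  · set τ := Tuple.sort k
    have hsorted : StrictMono (k ∘ τ) := Tuple.strictMono_comp_sort hk
    have hk : alternant k =
        Equiv.Perm.sign τ⁻¹ • (alternant (k ∘ τ) : MvPolynomial (Fin n) R) := by
      rw [← alternant_comp_perm, Function.comp_assoc, ← Equiv.Perm.coe_mul, mul_inv_cancel,
        Equiv.Perm.coe_one, Function.comp_id]
    rw [hk, Units.smul_def]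
    exact Submodule.smul_of_tower_mem _ _ (Submodule.subset_span ⟨⟨_, hsorted⟩, rfl⟩)
  · rw [alternant_eq_zero_of_not_injective hk]
    exact Submodule.zero_mem _

noncomputable def antisymmetrize : MvPolynomial (Fin n) R →ₗ[R] MvPolynomial (Fin n) R :=
  ∑ σ : Equiv.Perm (Fin n), Equiv.Perm.sign σ • (rename (R := R) σ).toLinearMap

theorem antisymmetrize_apply (p : MvPolynomial (Fin n) R) :
    antisymmetrize p = ∑ σ : Equiv.Perm (Fin n), Equiv.Perm.sign σ • rename σ p := by
  simp [antisymmetrize]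

theorem antisymmetrize_monomial (m : Fin n →₀ ℕ) (c : R) :
    antisymmetrize (monomial m c) = c • alternant m := by
  rw [← mul_one c, ← smul_eq_mul, ← smul_monomial, map_smul, smul_eq_mul, mul_one,
    antisymmetrize_apply, alternant_eq_sum]
  congr 1
  refine Finset.sum_congr rfl fun σ _ => ?_
  rw [← Finsupp.equivFunOnFinite.symm_apply_apply m, ← prod_X_pow_eq_monomial_equivFunOnFinite]
  simp

theorem antisymmetrize_vandermonde_mul [IsDomain R] {s : MvPolynomial (Fin n) R}
    (hs : s.IsSymmetric) :
    antisymmetrize (vandermonde n * s) = n.factorial • (vandermonde n * s) := by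
  simp [antisymmetrize_apply, rename_vandermonde, hs _, smul_mul_assoc, smul_smul,
    Fintype.card_perm]

theorem isSymmetric_of_vandermonde_mul [IsDomain R] {s : MvPolynomial (Fin n) R}
    (h : ∀ π : Equiv.Perm (Fin n),
      rename π (vandermonde n * s) = Equiv.Perm.sign π • (vandermonde n * s)) :
    s.IsSymmetric := fun π => by
  have := h π
  rw [map_mul, rename_vandermonde, smul_mul_assoc, smul_left_cancel_iff] at this
  exact mul_left_cancel₀ vandermonde_ne_zero this

end Alternant

section Field

variable {K : Type*} [Field K] {n : ℕ}

theorem vandermonde_dvd {p : MvPolynomial (Fin n) K}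
    (hp : ∀ i j : Fin n, i < j → X j - X i ∣ p) : vandermonde n ∣ p := by
  have hrel : ∀ i j k l : Fin n, i < j → k < l → (i, j) ≠ (k, l) →
      IsRelPrime (X j - X i : MvPolynomial (Fin n) K) (X l - X k) := fun i j k l hij hkl hne =>
    (prime_X_sub_X hij.ne').irreducible.isRelPrime_iff_not_dvd.mpr fun h =>
      hne (by simp [(X_sub_X_dvd_X_sub_X_iff hij hkl).mp h])
  refine Finset.prod_dvd_of_isRelPrime (fun i _ i' _ hii' => ?_) fun i _ =>
    Finset.prod_dvd_of_isRelPrime (fun j hj j' hj' hjj' => ?_) fun j hj => ?_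
  · exact IsRelPrime.prod_left fun j hj => IsRelPrime.prod_right fun j' hj' =>
      hrel _ _ _ _ (Finset.mem_Ioi.mp hj) (Finset.mem_Ioi.mp hj') (by simp [hii'])
  · exact hrel _ _ _ _ (Finset.mem_Ioi.mp hj) (Finset.mem_Ioi.mp hj') (by simp [hjj'])
  · exact hp i j (Finset.mem_Ioi.mp hj)

theorem vandermonde_dvd_alternant (k : Fin n → ℕ) :
    (vandermonde n : MvPolynomial (Fin n) K) ∣ alternant k :=
  vandermonde_dvd fun i j hij =>
    (X_sub_X_dvd_iff j i _).mpr (aeval_alternant_eq_zero hij.ne' (by simp [hij.ne]) k)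

theorem exists_isSymmetric_alternant_eq_vandermonde_mul (k : Fin n → ℕ) :
    ∃ s : MvPolynomial (Fin n) K, s.IsSymmetric ∧ alternant k = vandermonde n * s := by
  obtain ⟨s, hs⟩ := vandermonde_dvd_alternant (K := K) k
  exact ⟨s, isSymmetric_of_vandermonde_mul fun π => by rw [← hs, rename_alternant], hs⟩

theorem span_alternant_strictMono [CharZero K] :
    Submodule.span K (Set.range fun k : {k : Fin n → ℕ // StrictMono k} => alternant k.1) =
      (Subalgebra.toSubmodule (symmetricSubalgebra (Fin n) K)).map
        (LinearMap.mulLeft K (vandermonde n)) := by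
  apply le_antisymm
  · rw [Submodule.span_le]
    rintro _ ⟨k, rfl⟩
    obtain ⟨s, hs, hk⟩ := exists_isSymmetric_alternant_eq_vandermonde_mul (K := K) k.1
    exact ⟨s, (mem_symmetricSubalgebra s).mpr hs, hk.symm⟩
  · rintro _ ⟨s, hs, rfl⟩
    have hfact : (n.factorial : K) ≠ 0 := by exact_mod_cast n.factorial_ne_zero
    have h : vandermonde n * s = (n.factorial : K)⁻¹ • antisymmetrize (vandermonde n * s) := by
      rw [antisymmetrize_vandermonde_mul ((mem_symmetricSubalgebra s).mp hs),
        ← Nat.cast_smul_eq_nsmul K, smul_smul, inv_mul_cancel₀ hfact, one_smul]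
    rw [LinearMap.mulLeft_apply, h, ← support_sum_monomial_coeff (vandermonde n * s), map_sum]
    simp only [antisymmetrize_monomial]
    exact Submodule.smul_mem _ _ (Submodule.sum_mem _ fun m _ =>
      Submodule.smul_mem _ _ (alternant_mem_span_strictMono m))

end Field

end MvPolynomial

section Shuffle

variable {d e : ℕ}

def blockPerm (π : Equiv.Perm (Fin d)) (ρ : Equiv.Perm (Fin e)) : Equiv.Perm (Fin (d + e)) :=
  finSumFinEquiv.permCongr (π.sumCongr ρ)

@[simp]
theorem blockPerm_castAdd (π : Equiv.Perm (Fin d)) (ρ : Equiv.Perm (Fin e)) (i : Fin d) :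
    blockPerm π ρ (Fin.castAdd e i) = Fin.castAdd e (π i) := by
  simp [blockPerm, Equiv.permCongr_apply]

@[simp]
theorem blockPerm_natAdd (π : Equiv.Perm (Fin d)) (ρ : Equiv.Perm (Fin e)) (j : Fin e) :
    blockPerm π ρ (Fin.natAdd d j) = Fin.natAdd d (ρ j) := by
  simp [blockPerm, Equiv.permCongr_apply]

theorem sign_blockPerm (π : Equiv.Perm (Fin d)) (ρ : Equiv.Perm (Fin e)) :
    Equiv.Perm.sign (blockPerm π ρ) = Equiv.Perm.sign π * Equiv.Perm.sign ρ := by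
  simp [blockPerm, Equiv.Perm.sign_permCongr, Equiv.Perm.sign_sumCongr]

theorem blockPerm_inv_castAdd (π : Equiv.Perm (Fin d)) (ρ : Equiv.Perm (Fin e)) (i : Fin d) :
    (blockPerm π ρ)⁻¹ (Fin.castAdd e i) = Fin.castAdd e (π⁻¹ i) := by
  rw [Equiv.Perm.inv_eq_iff_eq, blockPerm_castAdd]
  simp

theorem blockPerm_inv_natAdd (π : Equiv.Perm (Fin d)) (ρ : Equiv.Perm (Fin e)) (j : Fin e) :
    (blockPerm π ρ)⁻¹ (Fin.natAdd d j) = Fin.natAdd d (ρ⁻¹ j) := by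
  rw [Equiv.Perm.inv_eq_iff_eq, blockPerm_natAdd]
  simp

@[simp]
theorem blockPerm_castSucc (π : Equiv.Perm (Fin d)) (ρ : Equiv.Perm (Fin 1)) (i : Fin d) :
    blockPerm π ρ i.castSucc = (π i).castSucc :=
  blockPerm_castAdd π ρ i

@[simp]
theorem blockPerm_last (π : Equiv.Perm (Fin d)) (ρ : Equiv.Perm (Fin 1)) :
    blockPerm π ρ (Fin.last d) = Fin.last d := by
  have h := blockPerm_natAdd π ρ 0
  rwa [Subsingleton.elim (ρ 0) 0] at h

theorem bijective_shuffle_mul_blockPerm :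
    Function.Bijective fun x : {σ : Equiv.Perm (Fin (d + e)) // IsShuffle σ} ×
        Equiv.Perm (Fin d) × Equiv.Perm (Fin e) => x.1.1 * blockPerm x.2.1 x.2.2 := by
  refine ⟨fun ⟨⟨σ, hσ⟩, π, ρ⟩ ⟨⟨σ', hσ'⟩, π', ρ'⟩ h => ?_, fun τ => ?_⟩
  · have hleft := hσ.1.eq_of_comp_perm hσ'.1 (π := π) (π' := π') <| funext fun i => by
      simpa using congrArg (· (Fin.castAdd e i)) h
    have hright := hσ.2.eq_of_comp_perm hσ'.2 (π := ρ) (π' := ρ') <| funext fun j => by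
      simpa using congrArg (· (Fin.natAdd d j)) h
    have hσσ' : σ = σ' := Equiv.ext fun x =>
      Fin.addCases (congrFun hleft.1) (congrFun hright.1) x
    simp [hσσ', hleft.2, hright.2]
  · set π := Tuple.sort fun i => τ (Fin.castAdd e i)
    set ρ := Tuple.sort fun j => τ (Fin.natAdd d j)
    have hshuffle : IsShuffle (τ * (blockPerm π⁻¹ ρ⁻¹)⁻¹) := by
      constructor
      · simpa [Equiv.Perm.mul_apply, blockPerm_inv_castAdd, Function.comp_def] using
          Tuple.strictMono_comp_sort (τ.injective.comp (Fin.castAdd_injective d e))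
      · simpa [Equiv.Perm.mul_apply, blockPerm_inv_natAdd, Function.comp_def] using
          Tuple.strictMono_comp_sort (τ.injective.comp (Fin.natAdd_injective e d))
    exact ⟨⟨⟨_, hshuffle⟩, π⁻¹, ρ⁻¹⟩, inv_mul_cancel_right τ _⟩

theorem sum_shuffle_mul_blockPerm {M : Type*} [AddCommMonoid M] (F : Equiv.Perm (Fin (d + e)) → M) :
    ∑ σ ∈ Finset.univ.filter (fun σ : Equiv.Perm (Fin (d + e)) => IsShuffle σ),
      ∑ π : Equiv.Perm (Fin d), ∑ ρ : Equiv.Perm (Fin e), F (σ * blockPerm π ρ) = ∑ τ, F τ := by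
  rw [← Fintype.sum_bijective _ bijective_shuffle_mul_blockPerm _ F fun _ => rfl,
    ← Finset.sum_subtype_eq_sum_filter, Finset.subtype_univ]
  simp only [Fintype.sum_prod_type]

end Shuffle

namespace MvPolynomial

theorem alternant_eq_sum_shuffle {R : Type*} [CommRing R] {d : ℕ} (k : Fin (d + 1) → ℕ) :
    (alternant k : MvPolynomial (Fin (d + 1)) R) =
      ∑ σ ∈ Finset.univ.filter (fun σ : Equiv.Perm (Fin (d + 1)) => IsShuffle (d := d) (e := 1) σ),
        Equiv.Perm.sign σ • rename σ (rename Fin.castSucc (alternant fun i => k i.castSucc) *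
          X (Fin.last d) ^ k (Fin.last d)) := by
  rw [alternant_eq_sum, ← sum_shuffle_mul_blockPerm]
  refine Finset.sum_congr rfl fun σ _ => ?_
  rw [alternant_eq_sum, map_sum, Finset.sum_mul, map_sum, Finset.smul_sum]
  refine Finset.sum_congr rfl fun π _ => ?_
  rw [Fintype.sum_unique]
  simp only [Equiv.Perm.default_eq, sign_blockPerm, Equiv.Perm.sign_one, mul_one, mul_smul,
    Units.smul_def, zsmul_eq_mul, Equiv.Perm.coe_mul, Function.comp_apply, Fin.prod_univ_castSucc,
    blockPerm_castSucc, blockPerm_last, map_mul, map_intCast, map_prod, map_pow, rename_X]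
  ring

end MvPolynomial

theorem embF_algebraMap {σ τ : Type} (v : σ → τ) (hv : Function.Injective v)
    (p : MvPolynomial σ ℚ) : embF v hv (algebraMap _ _ p) = algebraMap _ _ (rename v p) :=
  IsFractionRing.lift_algebraMap _ _

theorem zsmul_mul_inv_zsmul_of_unit {F : Type*} [DivisionRing F] (s : ℤˣ) (x y : F) :
    ((s : ℤ) • x) * ((s : ℤ) • y)⁻¹ = x * y⁻¹ := by
  rcases Int.units_eq_one_or s with rfl | rfl <;> simp [inv_neg]

theorem shuffleMul_psiF {d : ℕ} (a : MvPolynomial (Fin d) ℚ) (m : ℕ) :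
    shuffleMul (algebraMap (MvPolynomial (Fin d) ℚ) (FF d) a *
        (algebraMap (MvPolynomial (Fin d) ℚ) (FF d) (vandermonde d))⁻¹) (psiF m) =
      algebraMap (MvPolynomial (Fin (d + 1)) ℚ) (FF (d + 1))
          (∑ σ ∈ Finset.univ.filter
              (fun σ : Equiv.Perm (Fin (d + 1)) => IsShuffle (d := d) (e := 1) σ),
            Equiv.Perm.sign σ • rename σ (rename Fin.castSucc a * X (Fin.last d) ^ m)) *
        (algebraMap (MvPolynomial (Fin (d + 1)) ℚ) (FF (d + 1)) (vandermonde (d + 1)))⁻¹ := by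
  rw [shuffleMul, map_sum, Finset.sum_mul]
  refine Finset.sum_congr rfl fun σ _ => ?_
  have hden : (vandermonde (d + 1) : MvPolynomial (Fin (d + 1)) ℚ) =
      Equiv.Perm.sign σ • (rename (fun i : Fin d => σ (Fin.castAdd 1 i)) (vandermonde d) *
        ∏ μ : Fin d, ∏ ν : Fin 1, (X (σ (Fin.natAdd d ν)) - X (σ (Fin.castAdd 1 μ)))) := by
    rw [eq_comm, smul_eq_iff_eq_inv_smul, Int.units_inv_eq_self, ← rename_vandermonde,
      vandermonde_succ, map_mul, rename_rename]
    simp only [Fin.prod_univ_one, map_prod, map_sub, rename_X]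
    rfl
  have hnum : rename σ (rename Fin.castSucc a * X (Fin.last d) ^ m) =
      rename (fun i : Fin d => σ (Fin.castAdd 1 i)) a *
        rename (fun j : Fin 1 => σ (Fin.natAdd d j)) (X 0 ^ m) := by
    rw [map_mul, rename_rename]
    simp only [map_pow, rename_X]
    rfl
  rw [hden, hnum, Units.smul_def, Units.smul_def, map_zsmul, map_zsmul,
    zsmul_mul_inv_zsmul_of_unit, psiF]
  simp only [map_mul, map_inv₀, embF_algebraMap, mul_inv]
  ring

theorem iterProd_eq (d : ℕ) (k : Fin d → ℕ) :
    iterProd d k = algebraMap (MvPolynomial (Fin d) ℚ) (FF d) (alternant k) *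
      (algebraMap (MvPolynomial (Fin d) ℚ) (FF d) (vandermonde d))⁻¹ := by
  induction d with
  | zero => simp [iterProd, alternant, vandermonde]
  | succ d ih => rw [iterProd, ih, shuffleMul_psiF, ← alternant_eq_sum_shuffle]

theorem iterProd_comp_perm {d : ℕ} (k : Fin d → ℕ) (π : Equiv.Perm (Fin d)) :
    iterProd d (k ∘ π) = Equiv.Perm.sign π • iterProd d k := by
  rw [iterProd_eq, iterProd_eq, alternant_comp_perm, Units.smul_def, Units.smul_def, map_zsmul,
    smul_mul_assoc]

theorem iterProd_one (k : Fin 1 → ℕ) : iterProd 1 k = psiF (k 0) := by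
  simp [iterProd_eq, alternant, vandermonde, psiF]

theorem shuffleMul_psiF_psiF (a b : ℕ) : shuffleMul (psiF a) (psiF b) = iterProd 2 ![a, b] := by
  rw [iterProd, iterProd_one]
  rfl

theorem shuffleMul_psiF_anticomm (i j : ℕ) :
    shuffleMul (psiF i) (psiF j) = -shuffleMul (psiF j) (psiF i) := by
  have h := iterProd_comp_perm ![j, i] (Equiv.swap 0 1)
  rw [Equiv.Perm.sign_swap (by decide)] at h
  have hswap : ![j, i] ∘ Equiv.swap 0 1 = ![i, j] := by
    ext t
    fin_cases t <;> rfl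
  rw [shuffleMul_psiF_psiF, shuffleMul_psiF_psiF, ← hswap, h, Units.neg_smul, one_smul]

noncomputable def divVandermonde (d : ℕ) : MvPolynomial (Fin d) ℚ →ₗ[ℚ] FF d where
  toFun p := algebraMap (MvPolynomial (Fin d) ℚ) (FF d) p *
    (algebraMap (MvPolynomial (Fin d) ℚ) (FF d) (vandermonde d))⁻¹
  map_add' p q := by rw [map_add, add_mul]
  map_smul' c p := by rw [map_rat_smul, smul_mul_assoc, RingHom.id_apply]

theorem divVandermonde_apply {d : ℕ} (p : MvPolynomial (Fin d) ℚ) :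
    divVandermonde d p = algebraMap (MvPolynomial (Fin d) ℚ) (FF d) p *
      (algebraMap (MvPolynomial (Fin d) ℚ) (FF d) (vandermonde d))⁻¹ := rfl

theorem algebraMap_vandermonde_ne_zero (d : ℕ) :
    algebraMap (MvPolynomial (Fin d) ℚ) (FF d) (vandermonde d) ≠ 0 :=
  (map_ne_zero_iff _ (IsFractionRing.injective _ _)).mpr vandermonde_ne_zero

theorem divVandermonde_injective (d : ℕ) : Function.Injective (divVandermonde d) := fun _ _ h =>
  IsFractionRing.injective (MvPolynomial (Fin d) ℚ) (FF d) <|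
    mul_right_cancel₀ (inv_ne_zero (algebraMap_vandermonde_ne_zero d)) h

theorem divVandermonde_vandermonde_mul {d : ℕ} (p : MvPolynomial (Fin d) ℚ) :
    divVandermonde d (vandermonde d * p) = algebraMap (MvPolynomial (Fin d) ℚ) (FF d) p := by
  rw [divVandermonde_apply, map_mul, mul_comm, ← mul_assoc,
    inv_mul_cancel₀ (algebraMap_vandermonde_ne_zero d), one_mul]

theorem iterProd_eq_divVandermonde_alternant (d : ℕ) :
    (fun k : {k : Fin d → ℕ // StrictMono k} => iterProd d k.1) =
      divVandermonde d ∘ fun k => alternant k.1 :=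
  funext fun k => iterProd_eq d k.1

theorem symPart_eq_map (d : ℕ) :
    symPart d = ((Subalgebra.toSubmodule (symmetricSubalgebra (Fin d) ℚ)).map
      (LinearMap.mulLeft ℚ (vandermonde d))).map (divVandermonde d) := by
  rw [← Submodule.map_comp, ← Submodule.span_eq (Subalgebra.toSubmodule _), ← Submodule.span_image,
    symPart]
  congr 1
  ext z
  simp [divVandermonde_vandermonde_mul, mem_symmetricSubalgebra]

theorem linearIndependent_iterProd (d : ℕ) :
    LinearIndependent ℚ fun k : {k : Fin d → ℕ // StrictMono k} => iterProd d k.1 := by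
  rw [iterProd_eq_divVandermonde_alternant]
  exact linearIndependent_alternant.map' _ (LinearMap.ker_eq_bot.mpr (divVandermonde_injective d))

theorem span_iterProd (d : ℕ) :
    Submodule.span ℚ (Set.range fun k : {k : Fin d → ℕ // StrictMono k} => iterProd d k.1) =
      symPart d := by
  rw [iterProd_eq_divVandermonde_alternant, Set.range_comp, Submodule.span_image,
    span_alternant_strictMono, symPart_eq_map]

/-- the shuffle algebra `⊕_d ℚ[x_1,…,x_d]^{S_d}` is the exterior
algebra on `ψ_0, ψ_1, ψ_2, …`: the generators anti-commute, and the monomials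
`ψ_{k_1} * ⋯ * ψ_{k_d}` with `k_1 < ⋯ < k_d` form a `ℚ`-basis of the degree-`d`
component `ℚ[x_1,…,x_d]^{S_d}`. -/
theorem coha_point_exterior_algebra :
    (∀ i j : ℕ, shuffleMul (psiF i) (psiF j) = -shuffleMul (psiF j) (psiF i)) ∧
    (∀ d : ℕ,
      LinearIndependent ℚ
        (fun k : {k : Fin d → ℕ // StrictMono k} => iterProd d k.1) ∧
      Submodule.span ℚ
          (Set.range fun k : {k : Fin d → ℕ // StrictMono k} => iterProd d k.1) =
        symPart d) :=
  ⟨shuffleMul_psiF_anticomm, fun d => ⟨linearIndependent_iterProd d, span_iterProd d⟩⟩
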